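/- (Convergence of inexact gradient descent with bounded estimation error.) Let F : EuclideanSpace ℝ (Fin n) → ℝ be differentiable with gradient Lipschitz with constant L > 0 and bounded below by F* ∈ ℝ. Let 0 < η < 1/(2L), δ ≥ 0, T ≥ 1 a natural number, and let the sequences w, g : ℕ → EuclideanSpace ℝ (Fin n) satisfy, for every t < T, w(t+1) = w(t) − η·g(t) and ‖g(t) − ∇F(w(t))‖ ≤ δ. Then (1/T)·Σ_{t=0}^{T−1} ‖∇F(w(t))‖² ≤ 2·(F(w(0)) − F*)/(η·(1 − 2Lη)·T) + ((1 + 2Lη)/(1 − 2Lη))·δ². -/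

import Mathlib

/-!
Along the segment from `x` to `x + v` the Lipschitz gradient gives the quadratic upper bound
`F (x + v) ≤ F x + ⟪∇F x, v⟫ + L/2 ‖v‖²`. Applied to the step `v = -η g` with
`‖g - ∇F x‖ ≤ δ`, it shows that each step decreases `F` by `η(1 - 2Lη)/2 ‖∇F x‖²` up to an
error `η(1 + 2Lη)/2 δ²`. Summing over `T` steps telescopes, and `F ≥ F*` bounds the total
decrease.
-/

open RealInnerProductSpace Finset
open scoped NNReal

section Descent

variable {E : Type*} [NormedAddCommGroup E] [InnerProductSpace ℝ E] [CompleteSpace E] {F : E → ℝ}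

theorem HasGradientAt.hasDerivAt_comp_add_smul {f' x v : E} {s : ℝ}
    (h : HasGradientAt F f' (x + s • v)) :
    HasDerivAt (fun r : ℝ => F (x + r • v)) ⟪f', v⟫ s := by
  have hline : HasDerivAt (fun r : ℝ => x + r • v) v s := by
    simpa using ((hasDerivAt_id s).smul_const v).const_add x
  exact (h.hasFDerivAt.comp_hasDerivAt s hline).congr_deriv
    (InnerProductSpace.toDual_apply_apply ..)

theorem le_add_inner_gradient_add_sq_of_lipschitzWith (hF : Differentiable ℝ F) {L : ℝ≥0}
    (hlip : LipschitzWith L (gradient F)) (x v : E) :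
    F (x + v) ≤ F x + ⟪gradient F x, v⟫ + L / 2 * ‖v‖ ^ 2 := by
  set φ : ℝ → ℝ := fun s => F (x + s • v) - s * ⟪gradient F x, v⟫ - L / 2 * s ^ 2 * ‖v‖ ^ 2
  set φ' : ℝ → ℝ := fun s =>
    ⟪gradient F (x + s • v) - gradient F x, v⟫ - L * s * ‖v‖ ^ 2
  have hφ : ∀ s, HasDerivAt φ (φ' s) s := by
    intro s
    refine (((hF (x + s • v)).hasGradientAt.hasDerivAt_comp_add_smul.sub
      ((hasDerivAt_id s).mul_const ⟪gradient F x, v⟫)).sub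
      (((hasDerivAt_pow 2 s).const_mul ((L : ℝ) / 2)).mul_const (‖v‖ ^ 2))).congr_deriv ?_
    simp only [φ', inner_sub_left]
    ring
  have hφ'_nonpos : ∀ s, 0 ≤ s → φ' s ≤ 0 := by
    intro s hs
    have hgrad : ‖gradient F (x + s • v) - gradient F x‖ ≤ L * ‖s • v‖ := by
      simpa [dist_eq_norm] using hlip.dist_le_mul (x + s • v) x
    refine sub_nonpos.2 ?_
    calc ⟪gradient F (x + s • v) - gradient F x, v⟫
        ≤ ‖gradient F (x + s • v) - gradient F x‖ * ‖v‖ := real_inner_le_norm _ _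
      _ ≤ L * ‖s • v‖ * ‖v‖ := by gcongr
      _ = L * s * ‖v‖ ^ 2 := by rw [norm_smul, Real.norm_of_nonneg hs]; ring
  have hanti : AntitoneOn φ (Set.Ici 0) :=
    antitoneOn_of_hasDerivWithinAt_nonpos (convex_Ici 0)
      (fun s _ => (hφ s).continuousAt.continuousWithinAt) (fun s _ => (hφ s).hasDerivWithinAt)
      (fun s hs => hφ'_nonpos s (interior_subset hs))
  have := hanti Set.self_mem_Ici (Set.mem_Ici.2 zero_le_one) zero_le_one
  simp only [φ, one_smul, zero_smul, add_zero, one_mul, zero_mul, one_pow, sub_zero] at this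
  linarith

theorem le_sub_sq_norm_gradient_of_norm_sub_gradient_le (hF : Differentiable ℝ F) {L : ℝ≥0}
    (hlip : LipschitzWith L (gradient F)) {η δ : ℝ} (hη : 0 ≤ η) {x g : E}
    (herr : ‖g - gradient F x‖ ≤ δ) :
    F (x - η • g) ≤ F x - η * (1 - 2 * L * η) / 2 * ‖gradient F x‖ ^ 2
      + η * (1 + 2 * L * η) / 2 * δ ^ 2 := by
  set G := gradient F x
  have hdescent : F (x - η • g) ≤ F x - η * ⟪G, g⟫ + L / 2 * η ^ 2 * ‖g‖ ^ 2 := by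
    have := le_add_inner_gradient_add_sq_of_lipschitzWith hF hlip x (-(η • g))
    rw [← sub_eq_add_neg, inner_neg_right, real_inner_smul_right, norm_neg, norm_smul,
      mul_pow, Real.norm_eq_abs, sq_abs] at this
    linarith
  have herr_sq : ‖g - G‖ ^ 2 ≤ δ ^ 2 := pow_le_pow_left₀ (norm_nonneg _) herr 2
  -- polarization: `2⟪G, g⟫ = ‖G‖² + ‖g‖² - ‖g - G‖²`
  have hinner : ‖G‖ ^ 2 - δ ^ 2 ≤ 2 * ⟪G, g⟫ := by
    have := norm_sub_sq_real g G
    rw [real_inner_comm] at this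
    nlinarith [sq_nonneg ‖g‖]
  have hnorm : ‖g‖ ^ 2 ≤ 2 * (‖G‖ ^ 2 + δ ^ 2) :=
    calc ‖g‖ ^ 2 ≤ (‖G‖ + ‖g - G‖) ^ 2 := by gcongr; exact norm_le_insert' g G
      _ ≤ 2 * (‖G‖ ^ 2 + ‖g - G‖ ^ 2) := add_sq_le
      _ ≤ 2 * (‖G‖ ^ 2 + δ ^ 2) := by gcongr
  nlinarith [mul_le_mul_of_nonneg_left hinner hη,
    mul_le_mul_of_nonneg_left hnorm (by positivity : (0 : ℝ) ≤ L / 2 * η ^ 2)]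

end Descent

theorem Finset.sum_range_le_sub_add_nsmul_of_le_sub_succ {α : Type*} [AddCommGroup α]
    [PartialOrder α] [IsOrderedAddMonoid α] {a b : ℕ → α} {d : α} {T : ℕ}
    (h : ∀ t < T, b t ≤ a t - a (t + 1) + d) :
    ∑ t ∈ range T, b t ≤ a 0 - a T + T • d :=
  calc ∑ t ∈ range T, b t ≤ ∑ t ∈ range T, (a t - a (t + 1) + d) :=
        sum_le_sum fun t ht => h t (mem_range.1 ht)
    _ = a 0 - a T + T • d := by rw [sum_add_distrib, sum_range_sub', sum_const, card_range]

theorem inexact_gradient_descent_convergence_general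
    (n : ℕ) (F : EuclideanSpace ℝ (Fin n) → ℝ)
    (hF : Differentiable ℝ F)
    (L : ℝ) (hL : 0 < L)
    (hlip : LipschitzWith L.toNNReal (fun w => gradient F w))
    (Fstar : ℝ) (hbound : ∀ w, Fstar ≤ F w)
    (η δ : ℝ) (hη₀ : 0 < η) (hη₁ : η < 1 / (2 * L))
    (T : ℕ) (hT : 1 ≤ T)
    (w g : ℕ → EuclideanSpace ℝ (Fin n))
    (hstep : ∀ t < T, w (t + 1) = w t - η • g t)
    (herr : ∀ t < T, ‖g t - gradient F (w t)‖ ≤ δ) :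
    (1 / (T : ℝ)) * ∑ t ∈ Finset.range T, ‖gradient F (w t)‖ ^ 2 ≤
      2 * (F (w 0) - Fstar) / (η * (1 - 2 * L * η) * T)
        + ((1 + 2 * L * η) / (1 - 2 * L * η)) * δ ^ 2 := by
  have hLη : 0 < 1 - 2 * L * η := by
    rw [lt_div_iff₀ (by positivity)] at hη₁
    linarith
  set c := η * (1 - 2 * L * η) / 2
  set d := η * (1 + 2 * L * η) / 2 * δ ^ 2
  have hstep_descent : ∀ t < T,
      c * ‖gradient F (w t)‖ ^ 2 ≤ F (w t) - F (w (t + 1)) + d := by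
    intro t ht
    have := le_sub_sq_norm_gradient_of_norm_sub_gradient_le hF hlip hη₀.le (herr t ht)
    rw [Real.coe_toNNReal _ hL.le, ← hstep t ht] at this
    simp only [c, d]
    linarith
  have hsum := Finset.sum_range_le_sub_add_nsmul_of_le_sub_succ hstep_descent
  rw [← mul_sum, nsmul_eq_mul] at hsum
  have hT' : (0 : ℝ) < T := by exact_mod_cast hT
  have hc : 0 < c := by positivity
  calc (1 / (T : ℝ)) * ∑ t ∈ range T, ‖gradient F (w t)‖ ^ 2
      = c * (∑ t ∈ range T, ‖gradient F (w t)‖ ^ 2) / (c * T) := by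
        rw [mul_div_mul_left _ _ hc.ne', one_div_mul_eq_div]
    _ ≤ (F (w 0) - Fstar + T * d) / (c * T) := by gcongr; linarith [hbound (w T)]
    _ = 2 * (F (w 0) - Fstar) / (η * (1 - 2 * L * η) * T)
        + ((1 + 2 * L * η) / (1 - 2 * L * η)) * δ ^ 2 := by
        simp only [c, d]
        field_simp

/-- Convergence of inexact gradient descent with bounded estimation error:
with step `0 < η < 1/(2L)` and per-round gradient error at most `δ`, the
average squared gradient norm converges to a `δ²`-neighborhood of a critical
point. -/
theorem inexact_gradient_descent_convergence
    (n : ℕ) (F : EuclideanSpace ℝ (Fin n) → ℝ)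
    (hF : Differentiable ℝ F)
    (L : ℝ) (hL : 0 < L)
    (hlip : LipschitzWith L.toNNReal (fun w => gradient F w))
    (Fstar : ℝ) (hbound : ∀ w, Fstar ≤ F w)
    (η δ : ℝ) (hη₀ : 0 < η) (hη₁ : η < 1 / (2 * L)) (hδ : 0 ≤ δ)
    (T : ℕ) (hT : 1 ≤ T)
    (w g : ℕ → EuclideanSpace ℝ (Fin n))
    (hstep : ∀ t < T, w (t + 1) = w t - η • g t)
    (herr : ∀ t < T, ‖g t - gradient F (w t)‖ ≤ δ) :
    (1 / (T : ℝ)) * ∑ t ∈ Finset.range T, ‖gradient F (w t)‖ ^ 2 ≤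
      2 * (F (w 0) - Fstar) / (η * (1 - 2 * L * η) * T)
        + ((1 + 2 * L * η) / (1 - 2 * L * η)) * δ ^ 2 :=
  inexact_gradient_descent_convergence_general n F hF L hL hlip Fstar hbound η δ hη₀ hη₁ T hT w g
    hstep herr
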